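/- arXiv:2002.09426 — 4 statements merged into one kernel-verified Lean document; each statement's English description precedes it below -/
import Mathlib

section
/- Let g : [-π,π] → ℂ be continuously differentiable. Then (1/√n) Σ_{j=-n+1}^{n} g(ω_j) − (√n/π) ∫_{-π}^{π} g(ω) dω → 0 as n → ∞, where ω_j = πj/n. -/
/-!
Since `g'` is continuous on the compact interval, `g` is `K`-Lipschitz there. The points `ω_j`,
`j = -n+1, …, n`, are the right endpoints of the uniform partition of `[-π, π]` into `2n` pieces of
length `π / n`, and on each piece the right-endpoint rule errs by at most `K (π / n)²`. So
`(π / n) ∑ⱼ g(ω_j)` is within `2π² K / n` of `∫ g`, and multiplying by `√n / π` leaves `2π K / √n`.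
-/

open Real Filter Finset Set
open scoped NNReal

theorem sum_Icc_neg_add_one_eq_sum_range {M : Type*} [AddCommMonoid M] (f : ℤ → M) (n : ℕ) :
    ∑ j ∈ Icc (-(n : ℤ) + 1) n, f j = ∑ k ∈ range (2 * n), f (-n + 1 + k) := by
  rw [Int.Icc_eq_finset_map, sum_map, show (n + 1 - (-(n : ℤ) + 1)).toNat = 2 * n by omega]
  rfl

section

variable {E : Type*} [NormedAddCommGroup E] [NormedSpace ℝ E]

noncomputable def riemannSumRight (f : ℝ → E) (a b : ℝ) (N : ℕ) : E :=
  ((b - a) / N) • ∑ k ∈ range N, f (a + (k + 1) * ((b - a) / N))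

theorem norm_smul_sub_integral_le_of_lipschitzOnWith [CompleteSpace E] {f : ℝ → E} {K : ℝ≥0}
    {a b : ℝ} (hab : a ≤ b) (hf : LipschitzOnWith K f (Icc a b)) :
    ‖(b - a) • f b - ∫ x in a..b, f x‖ ≤ K * (b - a) ^ 2 := by
  have hfx : ∀ x ∈ uIoc a b, ‖f b - f x‖ ≤ K * (b - a) := by
    intro x hx
    rw [uIoc_of_le hab] at hx
    calc ‖f b - f x‖ ≤ K * dist b x := by
          simpa [dist_eq_norm] using hf.dist_le_mul b ⟨hab, le_rfl⟩ x (Ioc_subset_Icc_self hx)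
      _ ≤ K * (b - a) := by
          gcongr
          rw [Real.dist_eq, abs_of_nonneg (by linarith [hx.2])]
          linarith [hx.1]
  rw [← intervalIntegral.integral_const, ← intervalIntegral.integral_sub intervalIntegrable_const
    (hf.continuousOn.intervalIntegrable_of_Icc hab)]
  calc ‖∫ x in a..b, f b - f x‖ ≤ K * (b - a) * |b - a| :=
        intervalIntegral.norm_integral_le_of_norm_le_const hfx
    _ = K * (b - a) ^ 2 := by rw [abs_of_nonneg (sub_nonneg.2 hab)]; ring

theorem norm_riemannSumRight_sub_integral_le [CompleteSpace E] {f : ℝ → E} {K : ℝ≥0} {a b : ℝ}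
    (hab : a ≤ b) (hf : LipschitzOnWith K f (Icc a b)) {N : ℕ} (hN : N ≠ 0) :
    ‖riemannSumRight f a b N - ∫ x in a..b, f x‖ ≤ K * (b - a) ^ 2 / N := by
  set h := (b - a) / N with hh
  set x : ℕ → ℝ := fun k => a + k * h
  have hN' : (0 : ℝ) < N := by positivity
  have hh0 : 0 ≤ h := div_nonneg (sub_nonneg.2 hab) hN'.le
  have hstep : ∀ k, x (k + 1) - x k = h := fun k => by push_cast [x]; ring
  have hsub : ∀ k < N, Icc (x k) (x (k + 1)) ⊆ Icc a b := by
    intro k hk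
    have hk' : (k + 1 : ℝ) ≤ N := by exact_mod_cast hk
    refine Icc_subset_Icc (by simp only [x]; nlinarith) ?_
    calc x (k + 1) ≤ a + N * h := by push_cast [x]; nlinarith
      _ = b := by rw [hh]; field_simp; ring
  have hpiece : ∀ k < N, ‖h • f (x (k + 1)) - ∫ t in x k..x (k + 1), f t‖ ≤ K * h ^ 2 := by
    intro k hk
    simpa only [hstep] using norm_smul_sub_integral_le_of_lipschitzOnWith
      (by linarith [hstep k]) (hf.mono (hsub k hk))
  have hsplit : ∫ t in a..b, f t = ∑ k ∈ range N, ∫ t in x k..x (k + 1), f t := by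
    rw [intervalIntegral.sum_integral_adjacent_intervals fun k hk =>
      (hf.mono (hsub k hk)).continuousOn.intervalIntegrable_of_Icc (by linarith [hstep k])]
    congr 1
    · simp [x]
    · simp only [x, hh]; field_simp; ring
  have hpoint : ∀ k : ℕ, a + (k + 1) * h = x (k + 1) := fun k => by push_cast [x]; ring
  calc ‖riemannSumRight f a b N - ∫ x in a..b, f x‖
      = ‖∑ k ∈ range N, (h • f (x (k + 1)) - ∫ t in x k..x (k + 1), f t)‖ := by
        rw [riemannSumRight, hsplit, sum_sub_distrib, smul_sum]
        simp only [← hh, hpoint]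
    _ ≤ ∑ k ∈ range N, K * h ^ 2 :=
        (norm_sum_le _ _).trans (sum_le_sum fun k hk => hpiece k (mem_range.1 hk))
    _ = K * (b - a) ^ 2 / N := by
        rw [sum_const, card_range, nsmul_eq_mul, hh]; field_simp

theorem exists_lipschitzOnWith_Icc_of_hasDerivAt {f f' : ℝ → E} {a b : ℝ}
    (hf : ∀ x ∈ Icc a b, HasDerivAt f (f' x) x) (hf' : ContinuousOn f' (Icc a b)) :
    ∃ K, LipschitzOnWith K f (Icc a b) := by
  obtain ⟨C, hC⟩ := isCompact_Icc.exists_bound_of_continuousOn hf'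
  refine ⟨C.toNNReal, (convex_Icc a b).lipschitzOnWith_of_nnnorm_hasDerivWithin_le
    (fun x hx => (hf x hx).hasDerivWithinAt) fun x hx => ?_⟩
  rw [← NNReal.coe_le_coe, coe_nnnorm]
  exact (hC x hx).trans (Real.le_coe_toNNReal C)

theorem sum_fourierFrequencies_eq_riemannSumRight (g : ℝ → E) {n : ℕ} (hn : n ≠ 0) :
    (π / n) • ∑ j ∈ Icc (-(n : ℤ) + 1) n, g (π * j / n) = riemannSumRight g (-π) π (2 * n) := by
  have hstep : (π - -π) / (2 * n : ℕ) = π / n := by push_cast; field_simp; ring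
  rw [riemannSumRight, hstep, sum_Icc_neg_add_one_eq_sum_range]
  congr 1
  refine sum_congr rfl fun k _ => congrArg g ?_
  push_cast
  field_simp
  ring

end

theorem one_div_sqrt_mul_sub_sqrt_div_pi_mul {n : ℕ} (hn : n ≠ 0) (S I : ℂ) :
    1 / ((√n : ℝ) : ℂ) * S - ((√n : ℝ) : ℂ) / (π : ℂ) * I
      = ((√n / π : ℝ) : ℂ) * ((π / n) • S - I) := by
  have hn' : (0 : ℝ) < n := by positivity
  have hsqrt : ((√n : ℝ) : ℂ) ^ 2 = n := by exact_mod_cast sq_sqrt hn'.le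
  have hsqrt0 : ((√n : ℝ) : ℂ) ≠ 0 := by exact_mod_cast (sqrt_pos.2 hn').ne'
  rw [Complex.real_smul]
  push_cast
  field_simp
  linear_combination -π * S * hsqrt

theorem norm_fourierFrequencies_sum_sub_integral_le {g : ℝ → ℂ} {K : ℝ≥0}
    (hg : LipschitzOnWith K g (Icc (-π) π)) {n : ℕ} (hn : n ≠ 0) :
    ‖1 / ((√n : ℝ) : ℂ) * ∑ j ∈ Icc (-(n : ℤ) + 1) n, g (π * j / n) -
        ((√n : ℝ) : ℂ) / (π : ℂ) * ∫ ω in (-π)..π, g ω‖ ≤ 2 * π * K / √n := by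
  rw [one_div_sqrt_mul_sub_sqrt_div_pi_mul hn, sum_fourierFrequencies_eq_riemannSumRight g hn,
    norm_mul, Complex.norm_real, Real.norm_of_nonneg (by positivity)]
  calc √n / π * ‖riemannSumRight g (-π) π (2 * n) - ∫ ω in (-π)..π, g ω‖
      ≤ √n / π * (K * (π - -π) ^ 2 / (2 * n : ℕ)) := by
        gcongr
        exact norm_riemannSumRight_sub_integral_le (by linarith [pi_pos]) hg (by omega)
    _ = 2 * π * K / √n := by
        have hn' : (0 : ℝ) < n := by positivity
        push_cast
        field_simp
        rw [sq_sqrt hn'.le]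
        ring

theorem stmt_5 (g g' : ℝ → ℂ)
    (hderiv : ∀ ω ∈ Set.Icc (-Real.pi) Real.pi, HasDerivAt g (g' ω) ω)
    (hcont : ContinuousOn g' (Set.Icc (-Real.pi) Real.pi)) :
    Filter.Tendsto (fun n : ℕ =>
        (1 / ((Real.sqrt n : ℝ) : ℂ)) *
            (∑ j ∈ Finset.Icc (-(n : ℤ) + 1) (n : ℤ), g (Real.pi * j / n)) -
          (((Real.sqrt n : ℝ) : ℂ) / (Real.pi : ℂ)) * ∫ ω in (-Real.pi)..Real.pi, g ω)
      Filter.atTop (nhds 0) := by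
  obtain ⟨K, hK⟩ := exists_lipschitzOnWith_Icc_of_hasDerivAt hderiv hcont
  refine squeeze_zero_norm' (eventually_atTop.2 ⟨1, fun n hn =>
    norm_fourierFrequencies_sum_sub_integral_le hK (by omega)⟩) ?_
  exact tendsto_const_nhds.div_atTop (tendsto_sqrt_atTop.comp tendsto_natCast_atTop_atTop)
end

section
/- Let (Φ_j)_{j≥0}, (Φ_ℓ)_{ℓ≥0} be sequences of m×N real matrices and (𝔣_u)_{u∈ℤ} a sequence of m×m matrices such that Σ_j ||Φ_j|| max(1,j)^{1/2} < ∞ and Σ_u ||𝔣_u|| max(1,|u|)^{1/2} < ∞. Define b_k := (1/(2π)) ∫_{-π}^{π} e^{-ikω} Φ(e^{iω})^⊤ η(ω) Φ(e^{-iω}) dω, where Φ(z) = Σ_j Φ_j z^j and η(ω) = Σ_u 𝔣_u e^{-iωu}. Then Σ_{k∈ℤ} ||b_k|| |k|^{1/2} < ∞. -/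
/-!
Multiplying out the three absolutely convergent series, `Φ(e^{iω})ᵀ η(ω) Φ(e^{-iω})` is the
absolutely convergent trigonometric series `∑ e^{i(j-u-l)ω} Φ_jᵀ 𝔣_u Φ_l` over triples
`(j, u, l)`. Integrating term by term, `b_k` is the sum of `Φ_jᵀ 𝔣_u Φ_l` over the triples with
`j - u - l = k`. Since `|j - u - l|^{1/2} ≤ 3 max(1,j)^{1/2} max(1,|u|)^{1/2} max(1,l)^{1/2}`,
the sum of `‖b_k‖ |k|^{1/2}` over `k` is at most `3 A² B`, where `A` and `B` are the weighted
sums assumed finite for `Φ` and `𝔣`.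
-/

open Matrix

attribute [local instance] Matrix.frobeniusNormedAddCommGroup Matrix.frobeniusNormedSpace

open Complex Real

section MatrixProduct

variable {ι κ l m n R : Type*} [Fintype m]
  [TopologicalSpace R] [NonUnitalNonAssocRing R] [IsTopologicalRing R]

theorem HasSum.matrix_mul_right {f : ι → Matrix l m R} {s : Matrix l m R} (hf : HasSum f s)
    (t : Matrix m n R) : HasSum (fun i ↦ f i * t) (s * t) :=
  hf.map (mulRightLinearMap l ℕ t) (continuous_id.matrix_mul continuous_const)

theorem HasSum.matrix_mul_left {g : κ → Matrix m n R} {t : Matrix m n R} (hg : HasSum g t)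
    (s : Matrix l m R) : HasSum (fun j ↦ s * g j) (s * t) :=
  hg.map (mulLeftLinearMap n ℕ s) (continuous_const.matrix_mul continuous_id)

theorem HasSum.matrix_mul_eq [T2Space R] {f : ι → Matrix l m R} {g : κ → Matrix m n R}
    {s : Matrix l m R} {t : Matrix m n R} {u : Matrix l n R} (hf : HasSum f s) (hg : HasSum g t)
    (hfg : HasSum (fun x : ι × κ ↦ f x.1 * g x.2) u) : s * t = u :=
  (hf.matrix_mul_right t).unique <| hfg.prod_fiberwise fun i ↦ hg.matrix_mul_left (f i)

theorem Summable.matrix_tsum_mul_tsum [T2Space R] {f : ι → Matrix l m R} {g : κ → Matrix m n R}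
    (hf : Summable f) (hg : Summable g) (hfg : Summable fun x : ι × κ ↦ f x.1 * g x.2) :
    (∑' i, f i) * (∑' j, g j) = ∑' x : ι × κ, f x.1 * g x.2 :=
  hf.hasSum.matrix_mul_eq hg.hasSum hfg.hasSum

end MatrixProduct

section FrobeniusProduct

variable {ι κ ν 𝕜 l m n o : Type*} [RCLike 𝕜] [Fintype l] [Fintype m] [Fintype n] [Fintype o]

theorem summable_norm_matrix_mul {f : ι → Matrix l m 𝕜} {g : κ → Matrix m n 𝕜}
    (hf : Summable (‖f ·‖)) (hg : Summable (‖g ·‖)) :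
    Summable fun x : ι × κ ↦ ‖f x.1 * g x.2‖ :=
  (hf.mul_of_nonneg hg (fun _ ↦ norm_nonneg _) fun _ ↦ norm_nonneg _).of_nonneg_of_le
    (fun _ ↦ norm_nonneg _) fun _ ↦ frobenius_norm_mul _ _

theorem Matrix.tsum_mul_tsum_of_summable_norm {f : ι → Matrix l m 𝕜} {g : κ → Matrix m n 𝕜}
    (hf : Summable (‖f ·‖)) (hg : Summable (‖g ·‖)) :
    (∑' i, f i) * (∑' j, g j) = ∑' x : ι × κ, f x.1 * g x.2 :=
  hf.of_norm.matrix_tsum_mul_tsum hg.of_norm (summable_norm_matrix_mul hf hg).of_norm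

theorem Matrix.tsum_mul_tsum_mul_tsum_of_summable_norm {f : ι → Matrix l m 𝕜}
    {g : κ → Matrix m n 𝕜} {h : ν → Matrix n o 𝕜} (hf : Summable (‖f ·‖))
    (hg : Summable (‖g ·‖)) (hh : Summable (‖h ·‖)) :
    (∑' i, f i) * (∑' j, g j) * (∑' k, h k) = ∑' x : (ι × κ) × ν, f x.1.1 * g x.1.2 * h x.2 := by
  rw [tsum_mul_tsum_of_summable_norm hf hg,
    tsum_mul_tsum_of_summable_norm (summable_norm_matrix_mul hf hg) hh]

theorem Matrix.frobenius_norm_mul_mul_le (A : Matrix l m 𝕜) (B : Matrix m n 𝕜)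
    (C : Matrix n o 𝕜) : ‖A * B * C‖ ≤ ‖A‖ * ‖B‖ * ‖C‖ :=
  (frobenius_norm_mul _ _).trans <|
    mul_le_mul_of_nonneg_right (frobenius_norm_mul _ _) (norm_nonneg _)

end FrobeniusProduct

theorem norm_exp_smul_of_re_eq_zero {E : Type*} [SeminormedAddCommGroup E] [NormedSpace ℂ E]
    {z : ℂ} (hz : z.re = 0) (x : E) : ‖Complex.exp z • x‖ = ‖x‖ := by
  rw [norm_smul, Complex.norm_exp, hz, Real.exp_zero, one_mul]

theorem tsum_exp_smul_transpose_mul_tsum_mul_tsum {l m : Type*} [Fintype l] [Fintype m]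
    {A : ℕ → Matrix l m ℂ} {F : ℤ → Matrix l l ℂ} (hA : Summable (‖A ·‖))
    (hF : Summable (‖F ·‖)) (ω : ℝ) :
    (∑' j : ℕ, Complex.exp (I * j * ω) • A j)ᵀ * (∑' u : ℤ, Complex.exp (-I * u * ω) • F u) *
        (∑' j : ℕ, Complex.exp (-I * j * ω) • A j) =
      ∑' p : (ℕ × ℤ) × ℕ, Complex.exp (I * (p.1.1 - p.1.2 - p.2 : ℤ) * ω) •
        ((A p.1.1)ᵀ * F p.1.2 * A p.2) := by
  rw [transpose_tsum, tsum_mul_tsum_mul_tsum_of_summable_norm]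
  · refine tsum_congr fun p ↦ ?_
    simp only [transpose_smul, Matrix.smul_mul, Matrix.mul_smul, smul_smul, ← Complex.exp_add]
    push_cast
    ring_nf
  · exact hA.congr fun j ↦ by rw [frobenius_norm_transpose, norm_exp_smul_of_re_eq_zero (by simp)]
  · exact hF.congr fun u ↦ (norm_exp_smul_of_re_eq_zero (by simp) _).symm
  · exact hA.congr fun j ↦ (norm_exp_smul_of_re_eq_zero (by simp) _).symm

theorem integral_exp_I_mul_int_mul (t : ℤ) :
    ∫ ω in (-π)..π, Complex.exp (I * t * ω) = if t = 0 then (2 * π : ℂ) else 0 := by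
  split_ifs with ht
  · simp [ht, two_mul]
  have hc : I * t ≠ 0 := by simpa [Complex.I_ne_zero] using ht
  have hperiodic : Complex.exp (I * t * π) = Complex.exp (I * t * ↑(-π)) :=
    Complex.exp_eq_exp_iff_exists_int.mpr ⟨t, by push_cast; ring⟩
  rw [integral_exp_mul_complex hc, hperiodic, sub_self, zero_div]

theorem fourierCoeff_tsum_exp_smul {E ι : Type*} [NormedAddCommGroup E] [NormedSpace ℂ E]
    [CompleteSpace E] [Countable ι] (n : ι → ℤ) {c : ι → E} (hc : Summable (‖c ·‖)) (k : ℤ) :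
    (2 * π)⁻¹ • ∫ ω in (-π)..π, Complex.exp (-I * k * ω) • ∑' p, Complex.exp (I * n p * ω) • c p =
      ∑' p : n ⁻¹' {k}, c p := by
  classical
  have hphase : ∀ p (ω : ℝ), Complex.exp (-I * k * ω) • Complex.exp (I * n p * ω) • c p =
      Complex.exp (I * (n p - k : ℤ) * ω) • c p := fun p ω ↦ by
    rw [smul_smul, ← Complex.exp_add]; push_cast; ring_nf
  have hnorm : ∀ p (ω : ℝ), ‖Complex.exp (I * (n p - k : ℤ) * ω) • c p‖ = ‖c p‖ :=
    fun p ω ↦ norm_exp_smul_of_re_eq_zero (by simp) _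
  have hterm : ∀ p, ∫ ω in (-π)..π, Complex.exp (I * (n p - k : ℤ) * ω) • c p =
      (n ⁻¹' {k}).indicator (fun p ↦ (2 * π) • c p) p := fun p ↦ by
    rw [intervalIntegral.integral_smul_const, integral_exp_I_mul_int_mul, Set.indicator_apply]
    simp only [sub_eq_zero, Set.mem_preimage, Set.mem_singleton_iff]
    split_ifs <;> simp [← Complex.coe_smul]
  have hsum : HasSum (fun p ↦ ∫ ω in (-π)..π, Complex.exp (I * (n p - k : ℤ) * ω) • c p)
      (∫ ω in (-π)..π, ∑' p, Complex.exp (I * (n p - k : ℤ) * ω) • c p) :=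
    intervalIntegral.hasSum_integral_of_dominated_convergence (fun p _ ↦ ‖c p‖)
      (fun p ↦ by fun_prop) (fun p ↦ .of_forall fun ω _ ↦ (hnorm p ω).le)
      (.of_forall fun _ _ ↦ hc) intervalIntegrable_const
      (.of_forall fun ω _ ↦ (Summable.of_norm_bounded hc fun p ↦ (hnorm p ω).le).hasSum)
  simp_rw [← tsum_const_smul'', hphase, ← hsum.tsum_eq, hterm, ← tsum_subtype, tsum_const_smul'',
    smul_smul]
  rw [inv_mul_cancel₀ (by positivity), one_smul]

theorem summable_norm_tsum_fiber_mul {E ι β : Type*} [SeminormedAddCommGroup E] (n : ι → β)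
    {c : ι → E} (hc : Summable (‖c ·‖)) {w : β → ℝ} (hw : ∀ k, 0 ≤ w k) {g : ι → ℝ}
    (hg : Summable g) (hcg : ∀ p, ‖c p‖ * w (n p) ≤ g p) :
    Summable fun k ↦ ‖∑' p : n ⁻¹' {k}, c p‖ * w k := by
  refine (hg.hasSum.tsum_fiberwise n).summable.of_nonneg_of_le
    (fun k ↦ mul_nonneg (norm_nonneg _) (hw k)) fun k ↦ ?_
  have hck : Summable fun p : n ⁻¹' {k} ↦ ‖c p‖ := hc.subtype _
  calc ‖∑' p : n ⁻¹' {k}, c p‖ * w k ≤ (∑' p : n ⁻¹' {k}, ‖c p‖) * w k :=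
        mul_le_mul_of_nonneg_right (norm_tsum_le_tsum_norm hck) (hw k)
    _ = ∑' p : n ⁻¹' {k}, ‖c p‖ * w k := tsum_mul_right.symm
    _ ≤ ∑' p : n ⁻¹' {k}, g p :=
        (hck.mul_right (w k)).tsum_le_tsum
          (fun p ↦ by simpa only [show n p = k from p.2] using hcg p) (hg.subtype _)

theorem sqrt_abs_sub_sub_le (x y z : ℝ) :
    √|x - y - z| ≤ 3 * (√(max 1 |x|) * √(max 1 |y|) * √(max 1 |z|)) := by
  set a := max 1 |x|
  set b := max 1 |y|
  set c := max 1 |z|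
  have ha : 1 ≤ a := le_max_left _ _
  have hb : 1 ≤ b := le_max_left _ _
  have hc : 1 ≤ c := le_max_left _ _
  have habs : |x - y - z| ≤ a + b + c := calc
    |x - y - z| ≤ |x| + |y| + |z| := (abs_sub _ _).trans (by gcongr; exact abs_sub _ _)
    _ ≤ a + b + c := by gcongr <;> exact le_max_right _ _
  have hab := one_le_mul_of_one_le_of_one_le ha hb
  have habc : a + b + c ≤ 3 ^ 2 * (a * b * c) := by nlinarith
  calc √|x - y - z| ≤ √(3 ^ 2 * (a * b * c)) := Real.sqrt_le_sqrt (habs.trans habc)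
    _ = 3 * (√a * √b * √c) := by
        rw [Real.sqrt_mul (by positivity), Real.sqrt_sq zero_le_three,
          Real.sqrt_mul (by positivity), Real.sqrt_mul (by positivity)]

theorem Summable.of_mul_sqrt_max_one {ι : Type*} {a x : ι → ℝ} (ha : ∀ i, 0 ≤ a i)
    (h : Summable fun i ↦ a i * √(max 1 (x i))) : Summable a :=
  h.of_nonneg_of_le ha fun i ↦
    le_mul_of_one_le_right (ha i) (Real.one_le_sqrt.mpr (le_max_left _ _))

theorem stmt_8 {m N : ℕ}
    (Φ : ℕ → Matrix (Fin m) (Fin N) ℝ)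
    (𝔣 : ℤ → Matrix (Fin m) (Fin m) ℂ)
    (hΦ : Summable fun j : ℕ => ‖Φ j‖ * Real.sqrt (max 1 (j : ℝ)))
    (h𝔣 : Summable fun u : ℤ => ‖𝔣 u‖ * Real.sqrt (max 1 |(u : ℝ)|))
    (b : ℤ → Matrix (Fin N) (Fin N) ℂ)
    (hb : ∀ k : ℤ, b k = (2 * Real.pi)⁻¹ •
      ∫ ω in (-Real.pi)..Real.pi,
        Complex.exp (-Complex.I * (k : ℂ) * (ω : ℂ)) •
          ((∑' j : ℕ, Complex.exp (Complex.I * (j : ℂ) * (ω : ℂ)) • (Φ j).map Complex.ofReal)ᵀ *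
           (∑' u : ℤ, Complex.exp (-Complex.I * (u : ℂ) * (ω : ℂ)) • 𝔣 u) *
           (∑' j : ℕ, Complex.exp (-Complex.I * (j : ℂ) * (ω : ℂ)) • (Φ j).map Complex.ofReal))) :
    Summable fun k : ℤ => ‖b k‖ * Real.sqrt |(k : ℝ)| := by
  set Φc : ℕ → Matrix (Fin m) (Fin N) ℂ := fun j ↦ (Φ j).map Complex.ofReal
  have hnormΦc : ∀ j, ‖Φc j‖ = ‖Φ j‖ := fun j ↦ frobenius_norm_map_eq _ _ Complex.norm_real
  have hΦc : Summable (‖Φc ·‖) :=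
    (hΦ.of_mul_sqrt_max_one fun _ ↦ norm_nonneg _).congr fun j ↦ (hnormΦc j).symm
  have h𝔣₀ : Summable (‖𝔣 ·‖) := h𝔣.of_mul_sqrt_max_one fun _ ↦ norm_nonneg _
  let n : (ℕ × ℤ) × ℕ → ℤ := fun p ↦ p.1.1 - p.1.2 - p.2
  let c : (ℕ × ℤ) × ℕ → Matrix (Fin N) (Fin N) ℂ := fun p ↦ (Φc p.1.1)ᵀ * 𝔣 p.1.2 * Φc p.2
  have hΦcT : Summable fun j ↦ ‖(Φc j)ᵀ‖ := hΦc.congr fun j ↦ (frobenius_norm_transpose _).symm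
  have hc : Summable (‖c ·‖) :=
    (summable_norm_matrix_mul (summable_norm_matrix_mul hΦcT h𝔣₀) hΦc :)
  have hb_fiber : ∀ k, b k = ∑' p : n ⁻¹' {k}, c p := fun k ↦ by
    refine (hb k).trans (.trans ?_ (fourierCoeff_tsum_exp_smul n hc k))
    congr! 3 with ω
    exact congrArg _ (tsum_exp_smul_transpose_mul_tsum_mul_tsum hΦc h𝔣₀ ω)
  simp_rw [hb_fiber]
  refine summable_norm_tsum_fiber_mul n hc (fun k ↦ Real.sqrt_nonneg _)
    (((hΦ.mul_of_nonneg h𝔣 (fun _ ↦ by positivity) fun _ ↦ by positivity).mul_of_nonneg hΦ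
      (fun _ ↦ by positivity) fun _ ↦ by positivity).mul_left 3) fun p ↦ ?_
  have hweight := sqrt_abs_sub_sub_le p.1.1 p.1.2 p.2
  simp only [Nat.abs_cast] at hweight
  calc ‖c p‖ * √|(n p : ℝ)| ≤ (‖Φ p.1.1‖ * ‖𝔣 p.1.2‖ * ‖Φ p.2‖) *
        (3 * (√(max 1 (p.1.1 : ℝ)) * √(max 1 |(p.1.2 : ℝ)|) * √(max 1 (p.2 : ℝ)))) := by
        refine mul_le_mul ?_ (by push_cast [n]; exact hweight) (by positivity) (by positivity)
        simpa only [c, frobenius_norm_transpose, hnormΦc] using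
          frobenius_norm_mul_mul_le (Φc p.1.1)ᵀ (𝔣 p.1.2) (Φc p.2)
    _ = _ := by ring
end

section
/- Let f : [-π,π] × Θ → Mat_{m×m}(ℂ) take positive definite Hermitian values and let ∇_ϑ f denote the gradient in ϑ ∈ ℝ^r. Suppose there exists ω* with ∇_ϑ f(ω*, ϑ_0) c ≠ 0 for a given c ∈ ℂ^r \ {0}, and f and ∇_ϑ f are continuous in ω. Then c^H Σ c > 0, where Σ := (1/(2π)) ∫_{-π}^{π} ∇_ϑ f(-ω,ϑ_0)^⊤ [ f(-ω,ϑ_0)^{-1} ⊗ f(ω,ϑ_0)^{-1} ] ∇_ϑ f(ω,ϑ_0) dω. In particular, if such an ω* exists for every c ≠ 0, then Σ is positive definite. -/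
open Matrix

open Kronecker in
lemma kron_conjTranspose {l m n p : Type*} (A : Matrix l m ℂ) (B : Matrix n p ℂ) :
    (A ⊗ₖ B)ᴴ = Aᴴ ⊗ₖ Bᴴ := by
  ext ⟨i, j⟩ ⟨k, l⟩
  simp [conjTranspose_apply, star_mul', mul_comm]

open Kronecker ComplexOrder in
lemma kron_posDef {m n : ℕ} {A : Matrix (Fin m) (Fin m) ℂ} {B : Matrix (Fin n) (Fin n) ℂ}
    (hA : A.PosDef) (hB : B.PosDef) : (A ⊗ₖ B).PosDef := by
  exact hA.kronecker hB

set_option maxHeartbeats 1000000 in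
open Kronecker ComplexOrder in
theorem stmt_15 {m r : ℕ} (f : ℝ → Matrix (Fin m) (Fin m) ℂ)
    (G : ℝ → Matrix (Fin m × Fin m) (Fin r) ℂ)
    (hfpd : ∀ ω, (f ω).PosDef)
    (hfc : Continuous f) (hGc : Continuous G)
    (hfsym : ∀ ω, f (-ω) = (f ω).map (starRingEnd ℂ))
    (hGsym : ∀ ω, G (-ω) = (G ω).map (starRingEnd ℂ))
    (c : Fin r → ℂ) (hc : c ≠ 0)
    (hstar : ∃ ωs ∈ Set.Icc (-Real.pi) Real.pi, (G ωs) *ᵥ c ≠ 0)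
    (S : Matrix (Fin r) (Fin r) ℂ)
    (hS : S = Matrix.of fun p q : Fin r =>
      (1 / (2 * (Real.pi : ℂ))) *
        ∫ ω in (-Real.pi)..Real.pi,
          ((G (-ω))ᵀ * ((f (-ω))⁻¹ ⊗ₖ (f ω)⁻¹) * G ω) p q) :
    0 < (star c ⬝ᵥ (S *ᵥ c)).re ∧ (star c ⬝ᵥ (S *ᵥ c)).im = 0 := by
  classical
  obtain ⟨M, hM⟩ : ∃ M : ℝ → Matrix (Fin r) (Fin r) ℂ,
      ∀ ω, M ω = (G (-ω))ᵀ * ((f (-ω))⁻¹ ⊗ₖ (f ω)⁻¹) * G ω := ⟨_, fun _ => rfl⟩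
  have hS' : S = Matrix.of fun p q : Fin r =>
      (1 / (2 * (Real.pi : ℂ))) * ∫ ω in (-Real.pi)..Real.pi, M ω p q := by
    simp only [hS, hM]
  clear hS
  obtain ⟨g, hg⟩ : ∃ g : ℝ → ℂ, ∀ ω, g ω = star c ⬝ᵥ (M ω *ᵥ c) := ⟨_, fun _ => rfl⟩
  -- continuity
  have hdet : ∀ ω, (f ω).det ≠ 0 := fun ω => (hfpd ω).det_pos.ne'
  have hinv : Continuous fun ω => (f ω)⁻¹ := by
    simp_rw [Matrix.inv_def, Ring.inverse_eq_inv']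
    exact (hfc.matrix_det.inv₀ hdet).smul hfc.matrix_adjugate
  have hinvneg : Continuous fun ω => (f (-ω))⁻¹ := hinv.comp continuous_neg
  have hkron : Continuous fun ω => (f (-ω))⁻¹ ⊗ₖ (f ω)⁻¹ := by
    apply continuous_matrix
    rintro ⟨i, j⟩ ⟨k, l⟩
    exact (hinvneg.matrix_elem i k).mul (hinv.matrix_elem j l)
  have hMc : Continuous M := by
    have : Continuous fun ω => (G (-ω))ᵀ * ((f (-ω))⁻¹ ⊗ₖ (f ω)⁻¹) * G ω :=
      (((hGc.comp continuous_neg).matrix_transpose.matrix_mul hkron).matrix_mul hGc)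
    simpa only [← funext hM] using this
  have hgc : Continuous g := by
    have : Continuous fun ω => star c ⬝ᵥ (M ω *ᵥ c) :=
      continuous_const.dotProduct (hMc.matrix_mulVec continuous_const)
    simpa only [← funext hg] using this
  -- pointwise positivity facts
  have hkeyg : ∀ ω, g ω = star (G ω *ᵥ c) ⬝ᵥ (((f (-ω))⁻¹ ⊗ₖ (f ω)⁻¹) *ᵥ (G ω *ᵥ c)) := by
    intro ω
    have hGT : (G (-ω))ᵀ = (G ω)ᴴ := by
      rw [hGsym ω]
      ext i j
      simp [conjTranspose_apply, Matrix.map_apply]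
    rw [hg, hM]
    simp only [hGT]
    rw [← Matrix.mulVec_mulVec, ← Matrix.mulVec_mulVec, Matrix.dotProduct_mulVec,
      ← Matrix.star_mulVec]
  have hPD : ∀ ω, ((f (-ω))⁻¹ ⊗ₖ (f ω)⁻¹).PosDef :=
    fun ω => kron_posDef (hfpd (-ω)).inv (hfpd ω).inv
  have hnonneg : ∀ ω, 0 ≤ g ω := by
    intro ω
    rw [hkeyg ω]
    exact (hPD ω).posSemidef.dotProduct_mulVec_nonneg _
  obtain ⟨ωs, hωs, hvs⟩ := hstar
  have hpos : 0 < g ωs := by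
    rw [hkeyg ωs]
    exact (hPD ωs).dotProduct_mulVec_pos hvs
  -- real-valuedness
  have him : ∀ ω, (g ω).im = 0 := fun ω => ((Complex.le_def.mp (hnonneg ω)).2).symm
  have hre : ∀ ω, 0 ≤ (g ω).re := fun ω => (Complex.le_def.mp (hnonneg ω)).1
  have hgre : ∀ ω, g ω = ((g ω).re : ℂ) := fun ω => Complex.ext rfl (him ω)
  -- integrability
  have hMint : ∀ p q : Fin r, IntervalIntegrable (fun ω => M ω p q) MeasureTheory.volume
      (-Real.pi) Real.pi := fun p q => (hMc.matrix_elem p q).intervalIntegrable _ _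
  -- the quadratic form as an integral
  have hquad : star c ⬝ᵥ (S *ᵥ c)
      = (1 / (2 * (Real.pi : ℂ))) * ∫ ω in (-Real.pi)..Real.pi, g ω := by
    have hgsum : ∀ ω, g ω = ∑ p, ∑ q, (star (c p) * c q) * M ω p q := by
      intro ω
      rw [hg ω]
      simp only [dotProduct, mulVec, Pi.star_apply, Finset.mul_sum]
      refine Finset.sum_congr rfl fun p _ => Finset.sum_congr rfl fun q _ => by ring
    have hint : (∫ ω in (-Real.pi)..Real.pi, g ω)
        = ∑ p, ∑ q, (star (c p) * c q) * ∫ ω in (-Real.pi)..Real.pi, M ω p q := by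
      rw [intervalIntegral.integral_congr (fun ω _ => hgsum ω)]
      rw [intervalIntegral.integral_finset_sum]
      · refine Finset.sum_congr rfl fun p _ => ?_
        rw [intervalIntegral.integral_finset_sum]
        · exact Finset.sum_congr rfl fun q _ => intervalIntegral.integral_const_mul _ _
        · exact fun q _ => (hMint p q).const_mul _
      · intro p _
        exact (continuous_finset_sum _ fun q _ =>
          ((continuous_const.mul (hMc.matrix_elem p q)) : Continuous _)).intervalIntegrable _ _
    rw [hint, hS']
    simp only [dotProduct, mulVec, Matrix.of_apply, Pi.star_apply, Finset.mul_sum]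
    refine Finset.sum_congr rfl fun p _ => Finset.sum_congr rfl fun q _ => by ring
  -- reduce to a real integral
  have hIre : (∫ ω in (-Real.pi)..Real.pi, g ω)
      = ((∫ ω in (-Real.pi)..Real.pi, (g ω).re : ℝ) : ℂ) := by
    rw [intervalIntegral.integral_congr (fun ω _ => hgre ω)]
    exact RCLike.intervalIntegral_ofReal
  have hIpos : 0 < ∫ ω in (-Real.pi)..Real.pi, (g ω).re := by
    apply intervalIntegral.integral_pos (by linarith [Real.pi_pos])
    · exact (Complex.continuous_re.comp hgc).continuousOn
    · exact fun x _ => hre x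
    · exact ⟨ωs, hωs, (Complex.lt_def.mp hpos).1⟩
  have hfinal : star c ⬝ᵥ (S *ᵥ c)
      = ((1 / (2 * Real.pi) * ∫ ω in (-Real.pi)..Real.pi, (g ω).re : ℝ) : ℂ) := by
    rw [hquad, hIre]
    push_cast
    ring
  rw [hfinal]
  constructor
  · rw [Complex.ofReal_re]
    positivity
  · rw [Complex.ofReal_im]
end

section
/- Consider a one-dimensional stationary process with spectral density f(ω,ϑ) = |Π(e^{-iω},ϑ)|^{-2} V(ϑ)/(2π), where Π(·,ϑ) is the invertible innovation filter and V(ϑ) > 0 the innovations variance. If Π(z,ϑ_1) ≠ Π(z,ϑ_2) for some |z| = 1 whenever ϑ_1 ≠ ϑ_2, then the function W^{(A)}(ϑ) := ∫_{-π}^{π} |Π(e^{iω},ϑ)|² f(ω,ϑ_0) dω has a unique global minimum on Θ at ϑ = ϑ_0, with minimum value V(ϑ_0). -/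
open Metric Set

lemma aux_summable {a : ℕ → ℝ} (ha : Summable fun j => |a j|) {z : ℂ} (hz : ‖z‖ ≤ 1) :
    Summable fun j => (a j : ℂ) * z ^ j := by
  apply Summable.of_norm_bounded ha
  intro j
  have : ‖(a j : ℂ) * z ^ j‖ = |a j| * ‖z‖ ^ j := by
    simp [Complex.norm_real, map_mul, map_pow]
  rw [this]
  calc |a j| * ‖z‖ ^ j ≤ |a j| * 1 := by
        apply mul_le_mul_of_nonneg_left _ (abs_nonneg _)
        exact pow_le_one₀ (norm_nonneg z) hz
    _ = |a j| := mul_one _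

lemma aux_zero (a : ℕ → ℝ) : (∑' j : ℕ, (a j : ℂ) * (0:ℂ) ^ j) = a 0 := by
  rw [tsum_eq_single 0]
  · simp
  · intro b hb; simp [zero_pow hb]

lemma aux_conj {a : ℕ → ℝ} (z : ℂ) :
    (starRingEnd ℂ) (∑' j : ℕ, (a j : ℂ) * z ^ j) = ∑' j : ℕ, (a j : ℂ) * ((starRingEnd ℂ) z) ^ j := by
  have : (starRingEnd ℂ) (∑' j : ℕ, (a j : ℂ) * z ^ j) = ∑' j : ℕ, (starRingEnd ℂ) ((a j : ℂ) * z ^ j) := by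
    rw [Complex.star_def.symm, tsum_star]
  rw [this]
  congr 1; funext j
  simp [map_mul, map_pow, Complex.conj_ofReal]

lemma aux_reg {a : ℕ → ℝ} (ha : Summable fun j => |a j|) :
    DifferentiableOn ℂ (fun z => ∑' j : ℕ, (a j : ℂ) * z ^ j) (ball (0:ℂ) 1) ∧
    ContinuousOn (fun z => ∑' j : ℕ, (a j : ℂ) * z ^ j) (closedBall (0:ℂ) 1) := by
  have hb : ∀ (j : ℕ) (z : ℂ), z ∈ closedBall (0:ℂ) 1 → ‖(a j : ℂ) * z ^ j‖ ≤ |a j| := by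
    intro j z hz
    rw [mem_closedBall, dist_zero_right] at hz
    have : ‖(a j : ℂ) * z ^ j‖ = |a j| * ‖z‖ ^ j := by
      simp [map_mul, map_pow]
    rw [this]
    calc |a j| * ‖z‖ ^ j ≤ |a j| * 1 := by
          apply mul_le_mul_of_nonneg_left _ (abs_nonneg _)
          exact pow_le_one₀ (norm_nonneg z) hz
      _ = |a j| := mul_one _
  have hu := tendstoUniformlyOn_tsum ha hb
  constructor
  · apply TendstoLocallyUniformlyOn.differentiableOn
      ((hu.mono ball_subset_closedBall).tendstoLocallyUniformlyOn)
    · filter_upwards with t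
      apply DifferentiableOn.fun_sum
      intro j _
      exact (differentiable_const _ |>.mul (differentiable_pow j)).differentiableOn
    · exact isOpen_ball
  · apply hu.continuousOn
    refine Filter.Eventually.frequently ?_
    filter_upwards with t
    apply continuousOn_finset_sum
    intro j _
    exact (continuous_const.mul (continuous_pow j)).continuousOn

lemma aux_mean {g : ℂ → ℂ} (hd : DiffContOnCl ℂ g (ball (0:ℂ) 1)) :
    ∫ θ in (0:ℝ)..(2*Real.pi), g (Complex.exp (θ * Complex.I)) = ((2*Real.pi : ℝ) : ℂ) * g 0 := by
  have h := hd.circleIntegral_sub_inv_smul (mem_ball_self one_pos)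
  rw [circleIntegral] at h
  simp only [deriv_circleMap, smul_eq_mul, sub_zero] at h
  have hkey : ∀ θ : ℝ, circleMap 0 1 θ * Complex.I * ((circleMap 0 1 θ)⁻¹ * g (circleMap 0 1 θ))
      = Complex.I * g (Complex.exp (θ * Complex.I)) := by
    intro θ
    have hne : circleMap 0 1 θ ≠ 0 := circleMap_ne_center one_ne_zero
    have hcm : circleMap 0 1 θ = Complex.exp (θ * Complex.I) := by simp [circleMap]
    rw [← hcm]; field_simp
  rw [intervalIntegral.integral_congr (fun θ _ => hkey θ)] at h
  rw [intervalIntegral.integral_const_mul] at h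
  have h2 : Complex.I * ∫ θ in (0:ℝ)..(2*Real.pi), g (Complex.exp (θ * Complex.I))
      = Complex.I * (((2*Real.pi : ℝ) : ℂ) * g 0) := by
    rw [h]; push_cast; ring
  exact mul_left_cancel₀ Complex.I_ne_zero h2

theorem stmt_16 {Θ : Type*} (c : Θ → ℕ → ℝ)
    (hc0 : ∀ ϑ, c ϑ 0 = 1)
    (hcsum : ∀ ϑ, Summable fun j => |c ϑ j|)
    (P : ℂ → Θ → ℂ)
    (hP : ∀ z ϑ, P z ϑ = ∑' j : ℕ, (c ϑ j : ℂ) * z ^ j)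
    (hinv : ∀ ϑ, ∀ z : ℂ, ‖z‖ ≤ 1 → P z ϑ ≠ 0)
    (V : Θ → ℝ) (hV : ∀ ϑ, 0 < V ϑ)
    (f : ℝ → Θ → ℝ)
    (hf : ∀ ω ϑ, f ω ϑ =
      ((‖P (Complex.exp (-Complex.I * ω)) ϑ‖)⁻¹) ^ 2 * V ϑ / (2 * Real.pi))
    (ϑ0 : Θ)
    (hid : ∀ ϑ1 ϑ2 : Θ, ϑ1 ≠ ϑ2 → ∃ z : ℂ, ‖z‖ = 1 ∧ P z ϑ1 ≠ P z ϑ2)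
    (W : Θ → ℝ)
    (hW : ∀ ϑ, W ϑ = ∫ ω in (-Real.pi)..Real.pi,
      (‖P (Complex.exp (Complex.I * ω)) ϑ‖) ^ 2 * f ω ϑ0) :
    W ϑ0 = V ϑ0 ∧ ∀ ϑ, ϑ ≠ ϑ0 → W ϑ0 < W ϑ := by
  have hpi : (0:ℝ) < Real.pi := Real.pi_pos
  -- |exp(I ω)| = 1
  have habs1 : ∀ ω : ℝ, ‖Complex.exp (Complex.I * ω)‖ = 1 := by
    intro ω
    rw [Complex.norm_exp]
    simp
  -- conjugation symmetry of |P|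
  have hconj : ∀ (ω : ℝ) (ϑ : Θ),
      ‖P (Complex.exp (-Complex.I * ω)) ϑ‖
        = ‖P (Complex.exp (Complex.I * ω)) ϑ‖ := by
    intro ω ϑ
    have h1 : Complex.exp (-Complex.I * ω) = (starRingEnd ℂ) (Complex.exp (Complex.I * ω)) := by
      rw [← Complex.exp_conj]
      congr 1
      simp [Complex.conj_ofReal]
    rw [h1, hP, ← aux_conj, ← hP, Complex.norm_conj]
  -- the pointwise integrand identity
  have hint : ∀ (ϑ : Θ) (ω : ℝ),
      (‖P (Complex.exp (Complex.I * ω)) ϑ‖) ^ 2 * f ω ϑ0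
        = (‖P (Complex.exp (Complex.I * ω)) ϑ
            / P (Complex.exp (Complex.I * ω)) ϑ0‖) ^ 2 * (V ϑ0 / (2 * Real.pi)) := by
    intro ϑ ω
    rw [hf, hconj, norm_div]
    rw [div_pow, div_eq_mul_inv (‖_‖ ^ 2), ← inv_pow]
    ring
  -- Part 1 : W ϑ0 = V ϑ0
  have hW0 : W ϑ0 = V ϑ0 := by
    rw [hW]
    have : ∀ ω ∈ uIcc (-Real.pi) Real.pi,
        (‖P (Complex.exp (Complex.I * ω)) ϑ0‖) ^ 2 * f ω ϑ0
          = V ϑ0 / (2 * Real.pi) := by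
      intro ω _
      rw [hint]
      have hne : P (Complex.exp (Complex.I * ω)) ϑ0 ≠ 0 :=
        hinv ϑ0 _ (le_of_eq (habs1 ω))
      rw [div_self hne]
      simp
    rw [intervalIntegral.integral_congr this, intervalIntegral.integral_const]
    field_simp
    rw [smul_eq_mul, mul_div_assoc', div_eq_iff (by positivity)]
    ring
  refine ⟨hW0, ?_⟩
  intro ϑ hne
  rw [hW0]
  -- setup for part 2
  set g : ℂ → ℂ := fun z => P z ϑ / P z ϑ0 with hg_def
  have hreg : ∀ ϑ' : Θ, DifferentiableOn ℂ (fun z => P z ϑ') (ball (0:ℂ) 1) ∧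
      ContinuousOn (fun z => P z ϑ') (closedBall (0:ℂ) 1) := by
    intro ϑ'
    have : (fun z => P z ϑ') = fun z => ∑' j : ℕ, (c ϑ' j : ℂ) * z ^ j :=
      funext fun z => hP z ϑ'
    rw [this]
    exact aux_reg (hcsum ϑ')
  have hden_ne : ∀ z ∈ closedBall (0:ℂ) 1, P z ϑ0 ≠ 0 := by
    intro z hz
    rw [mem_closedBall, dist_zero_right] at hz
    exact hinv ϑ0 z hz
  have hgd : DifferentiableOn ℂ g (ball (0:ℂ) 1) :=
    (hreg ϑ).1.div (hreg ϑ0).1 fun z hz =>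
      hden_ne z (ball_subset_closedBall hz)
  have hgc : ContinuousOn g (closedBall (0:ℂ) 1) :=
    (hreg ϑ).2.div (hreg ϑ0).2 hden_ne
  have hdc : DiffContOnCl ℂ g (ball (0:ℂ) 1) := by
    refine ⟨hgd, ?_⟩
    rw [closure_ball (0:ℂ) one_ne_zero]
    exact hgc
  have hg0 : g 0 = 1 := by
    have h0 : ∀ ϑ' : Θ, P 0 ϑ' = 1 := by
      intro ϑ'
      rw [hP, aux_zero, hc0]
      norm_num
    simp [hg_def, h0]
  -- G on the circle
  set G : ℝ → ℂ := fun ω => g (Complex.exp (Complex.I * ω)) with hG_def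
  have hGcont : Continuous G := by
    apply hgc.comp_continuous
    · exact Complex.continuous_exp.comp (continuous_const.mul Complex.continuous_ofReal)
    · intro ω
      rw [mem_closedBall, dist_zero_right]
      exact le_of_eq (habs1 ω)
  have hGper : Function.Periodic G (2 * Real.pi) := by
    intro ω
    have : Complex.exp (Complex.I * (↑(ω + 2 * Real.pi))) = Complex.exp (Complex.I * ω) := by
      push_cast
      rw [mul_add, Complex.exp_add]
      have : Complex.exp (Complex.I * (2 * Real.pi)) = 1 := by
        rw [show Complex.I * (2 * Real.pi) = 2 * Real.pi * Complex.I by ring]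
        exact_mod_cast Complex.exp_two_pi_mul_I
      rw [this, mul_one]
    simp only [hG_def, this]
  -- mean value : ∫_{-π}^{π} G = 2π
  have hmean : (∫ ω in (-Real.pi)..Real.pi, G ω) = ((2 * Real.pi : ℝ) : ℂ) := by
    have h1 : (∫ ω in (-Real.pi)..Real.pi, G ω)
        = ∫ ω in (0:ℝ)..(2 * Real.pi), G ω := by
      have := hGper.intervalIntegral_add_eq (-Real.pi) 0
      rw [show -Real.pi + 2 * Real.pi = Real.pi by ring, zero_add] at this
      exact this
    have h2 : (∫ ω in (0:ℝ)..(2 * Real.pi), G ω)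
        = ∫ θ in (0:ℝ)..(2 * Real.pi), g (Complex.exp (θ * Complex.I)) := by
      apply intervalIntegral.integral_congr
      intro θ _
      simp only [hG_def, mul_comm]
    rw [h1, h2, aux_mean hdc, hg0, mul_one]
  -- real part integral
  have hGint : IntervalIntegrable G MeasureTheory.volume (-Real.pi) Real.pi :=
    hGcont.intervalIntegrable _ _
  have hre : (∫ ω in (-Real.pi)..Real.pi, (G ω).re) = 2 * Real.pi := by
    have := Complex.reCLM.intervalIntegral_comp_comm hGint
    simp only [Complex.reCLM_apply] at this
    rw [this, hmean]
    simp
  -- pointwise decomposition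
  have hdecomp : ∀ ω : ℝ, (‖G ω‖) ^ 2
      = (‖G ω - 1‖) ^ 2 + 2 * (G ω).re - 1 := by
    intro ω
    simp only [Complex.sq_norm, Complex.normSq_apply, Complex.sub_re, Complex.sub_im,
      Complex.one_re, Complex.one_im]
    ring
  -- continuity of the real integrands
  have hcontA : Continuous fun ω => (‖G ω‖) ^ 2 :=
    (continuous_norm.comp hGcont).pow 2
  have hcontB : Continuous fun ω => (‖G ω - 1‖) ^ 2 :=
    (continuous_norm.comp (hGcont.sub continuous_const)).pow 2
  have hcontR : Continuous fun ω => (G ω).re := Complex.continuous_re.comp hGcont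
  -- integral identity
  have hsplit : (∫ ω in (-Real.pi)..Real.pi, (‖G ω‖) ^ 2)
      = (∫ ω in (-Real.pi)..Real.pi, (‖G ω - 1‖) ^ 2) + 2 * Real.pi := by
    have h1 : (∫ ω in (-Real.pi)..Real.pi, (‖G ω‖) ^ 2)
        = ∫ ω in (-Real.pi)..Real.pi,
            ((‖G ω - 1‖) ^ 2 + 2 * (G ω).re - 1) :=
      intervalIntegral.integral_congr fun ω _ => hdecomp ω
    rw [h1]
    rw [intervalIntegral.integral_sub
      (Continuous.intervalIntegrable (u := fun ω => ‖G ω - 1‖ ^ 2 + 2 * (G ω).re) ((hcontB.add (continuous_const.mul hcontR))) _ _)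
      (intervalIntegrable_const),
      intervalIntegral.integral_add (hcontB.intervalIntegrable _ _)
      (Continuous.intervalIntegrable (u := fun ω => 2 * (G ω).re) (continuous_const.mul hcontR) _ _),
      intervalIntegral.integral_const_mul, hre, intervalIntegral.integral_const]
    simp
    ring
  -- find a point of Ioo (-π, π) where G ≠ 1
  have hex : ∃ ω0 ∈ Ioo (-Real.pi) Real.pi, G ω0 ≠ 1 := by
    by_contra hcon
    push_neg at hcon
    have hGpi : G Real.pi = 1 := by
      have hcl : Real.pi ∈ closure (Ioo (-Real.pi) Real.pi) := by
        rw [closure_Ioo (by linarith : -Real.pi ≠ Real.pi)]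
        exact ⟨by linarith, le_refl _⟩
      have hnb : (nhdsWithin Real.pi (Ioo (-Real.pi) Real.pi)).NeBot :=
        mem_closure_iff_nhdsWithin_neBot.mp hcl
      have ht1 : Filter.Tendsto G (nhdsWithin Real.pi (Ioo (-Real.pi) Real.pi)) (nhds (G Real.pi)) :=
        (hGcont.continuousAt).continuousWithinAt
      have ht2 : Filter.Tendsto G (nhdsWithin Real.pi (Ioo (-Real.pi) Real.pi)) (nhds 1) := by
        apply Filter.Tendsto.congr' _ tendsto_const_nhds
        filter_upwards [self_mem_nhdsWithin] with x hx
        exact (hcon x hx).symm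
      exact tendsto_nhds_unique ht1 ht2
    obtain ⟨z, hz1, hzne⟩ := hid ϑ ϑ0 hne
    have hzden : P z ϑ0 ≠ 0 := hinv ϑ0 z (le_of_eq hz1)
    have hgz : g z ≠ 1 := by
      simp only [hg_def]
      intro h
      rw [div_eq_one_iff_eq hzden] at h
      exact hzne h
    have hzexp : Complex.exp (Complex.I * (Complex.arg z : ℂ)) = z := by
      conv_rhs => rw [← Complex.norm_mul_exp_arg_mul_I z]
      rw [hz1]
      push_cast
      rw [one_mul, mul_comm]
    have harg := Complex.arg_mem_Ioc z
    have hGarg : G (Complex.arg z) = g z := by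
      simp only [hG_def]
      rw [hzexp]
    rcases eq_or_lt_of_le harg.2 with heq | hlt
    · apply hgz
      rw [← hGarg, heq, hGpi]
    · apply hgz
      rw [← hGarg]
      exact hcon _ ⟨harg.1, hlt⟩
  obtain ⟨ω0, hω0mem, hω0⟩ := hex
  -- positivity of ∫ |G - 1|²
  have hpos : 0 < ∫ ω in (-Real.pi)..Real.pi, (‖G ω - 1‖) ^ 2 := by
    set h : ℝ → ℝ := fun ω => (‖G ω - 1‖) ^ 2 with hh_def
    have hh0 : 0 < h ω0 := by
      apply pow_pos
      rw [norm_pos_iff]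
      exact sub_ne_zero.mpr hω0
    have hopen : IsOpen {ω : ℝ | 0 < h ω} :=
      isOpen_lt continuous_const hcontB
    obtain ⟨ε, hε, hball⟩ := Metric.isOpen_iff.mp hopen ω0 hh0
    set s := max (ω0 - ε) (-Real.pi) with hs_def
    set t := min (ω0 + ε) Real.pi with ht_def
    have hst : s < t := by
      apply max_lt <;> apply lt_min <;> linarith [hω0mem.1, hω0mem.2, hε]
    have hsub : ∀ x ∈ Ioo s t, 0 < h x := by
      intro x hx
      apply hball
      rw [Real.ball_eq_Ioo]
      constructor
      · exact lt_of_le_of_lt (le_max_left _ _) hx.1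
      · exact lt_of_lt_of_le hx.2 (min_le_left _ _)
    have hmid : 0 < ∫ ω in s..t, h ω :=
      intervalIntegral.intervalIntegral_pos_of_pos_on
        (hcontB.intervalIntegrable _ _) hsub hst
    have h1 : (∫ ω in (-Real.pi)..s, h ω) + (∫ ω in s..t, h ω) + (∫ ω in t..Real.pi, h ω)
        = ∫ ω in (-Real.pi)..Real.pi, h ω := by
      rw [intervalIntegral.integral_add_adjacent_intervals
        (hcontB.intervalIntegrable _ _) (hcontB.intervalIntegrable _ _),
        intervalIntegral.integral_add_adjacent_intervals
        (hcontB.intervalIntegrable _ _) (hcontB.intervalIntegrable _ _)]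
    have hnn1 : 0 ≤ ∫ ω in (-Real.pi)..s, h ω :=
      intervalIntegral.integral_nonneg (le_max_right _ _) fun x _ => sq_nonneg _
    have hnn2 : 0 ≤ ∫ ω in t..Real.pi, h ω :=
      intervalIntegral.integral_nonneg (min_le_right _ _) fun x _ => sq_nonneg _
    linarith [h1]
  -- final assembly
  rw [hW]
  have hWϑ : (∫ ω in (-Real.pi)..Real.pi,
      (‖P (Complex.exp (Complex.I * ω)) ϑ‖) ^ 2 * f ω ϑ0)
      = ((∫ ω in (-Real.pi)..Real.pi, (‖G ω‖) ^ 2)) * (V ϑ0 / (2 * Real.pi)) := by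
    rw [intervalIntegral.integral_congr (fun ω _ => hint ϑ ω)]
    rw [intervalIntegral.integral_mul_const]
  rw [hWϑ, hsplit]
  have hVpos : 0 < V ϑ0 / (2 * Real.pi) := div_pos (hV ϑ0) (by linarith)
  have : 2 * Real.pi * (V ϑ0 / (2 * Real.pi)) = V ϑ0 := by
    field_simp
  nlinarith [hpos, hVpos]
end
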